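/- Let s > 0 and r₁, r₂ ∈ ℝ, put r² = r₁² + r₂² and ν = (−r² + √(r⁴ + 8 s r²))/2. Then 0 ≤ ν < 2s and ν² = r²(2s − ν). Moreover, the infimum over (x,y,c) ∈ ℝ³ with x² + y² + c² > 0 of F(x,y,c) := −(1/2) log(x² + y² + c²) + s (x² + y² + c²) − r₁ x − r₂ y equals (1/2) log(2s − ν) − r²/(2ν) + 1/2 (with the convention r²/(2ν) = 0 when r = 0), and if r > 0 this infimum is attained at (x,y,c) = (r₁/ν, r₂/ν, 0). -/

import Mathlib

/-!
The quadratic term `ν ‖w‖² / 2` splits the objective into two pieces that can be minimised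
separately. Since `log u ≤ u - 1` at `u = (2s - ν)‖w‖²`, the radial part
`-(1/2) log ‖w‖² + (s - ν/2)‖w‖²` is at least `(1/2) log (2s - ν) + 1/2`, and completing the square
gives `⟪r, w⟫ - ν ‖w‖² / 2 ≤ r² / (2ν)`. Both bounds are sharp at `w = r / ν` exactly when
`‖r / ν‖² = 1 / (2s - ν)`, i.e. when `ν² = r² (2s - ν)`, which is the quadratic solved by `ν`.
When `r = 0` (so `ν = 0`) the minimum is attained on the sphere `‖w‖² = 1 / (2s)`.
-/

open Real

namespace InnerMin

noncomputable def nuRoot (s a : ℝ) : ℝ := (-a + √(a ^ 2 + 8 * s * a)) / 2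

noncomputable def objective (s r₁ r₂ x y c : ℝ) : ℝ :=
  -(1 / 2) * log (x ^ 2 + y ^ 2 + c ^ 2) + s * (x ^ 2 + y ^ 2 + c ^ 2) - r₁ * x - r₂ * y

def objectiveValues (s r₁ r₂ : ℝ) : Set ℝ :=
  {v | ∃ x y c : ℝ, 0 < x ^ 2 + y ^ 2 + c ^ 2 ∧ v = objective s r₁ r₂ x y c}

section nuRoot

variable {s a : ℝ}

theorem nuRoot_nonneg (hs : 0 ≤ s) (ha : 0 ≤ a) : 0 ≤ nuRoot s a := by
  have : a ≤ √(a ^ 2 + 8 * s * a) := le_sqrt_of_sq_le (by nlinarith [mul_nonneg hs ha])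
  unfold nuRoot
  linarith

theorem nuRoot_pos (hs : 0 < s) (ha : 0 < a) : 0 < nuRoot s a := by
  have : a < √(a ^ 2 + 8 * s * a) := lt_sqrt_of_sq_lt (by nlinarith [mul_pos hs ha])
  unfold nuRoot
  linarith

theorem nuRoot_lt (hs : 0 < s) (ha : 0 ≤ a) : nuRoot s a < 2 * s := by
  have : √(a ^ 2 + 8 * s * a) < a + 4 * s :=
    (sqrt_lt' (by linarith)).2 (by nlinarith)
  unfold nuRoot
  linarith

theorem nuRoot_sq (hs : 0 ≤ s) (ha : 0 ≤ a) : nuRoot s a ^ 2 = a * (2 * s - nuRoot s a) := by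
  have h := sq_sqrt (show 0 ≤ a ^ 2 + 8 * s * a by positivity)
  unfold nuRoot
  linear_combination h / 4

end nuRoot

section objective

variable {s ν r₁ r₂ x y c : ℝ}

theorem half_log_add_le_of_lt {t : ℝ} (hν : ν < 2 * s) (ht : 0 < t) :
    (1 / 2) * log (2 * s - ν) + 1 / 2 + ν * t / 2 ≤ -(1 / 2) * log t + s * t := by
  have hq : 0 < 2 * s - ν := by linarith
  have h := log_le_sub_one_of_pos (mul_pos hq ht)
  rw [log_mul hq.ne' ht.ne'] at h
  linarith

theorem mul_add_mul_le_of_pos (hν : 0 < ν) :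
    r₁ * x + r₂ * y ≤ ν * (x ^ 2 + y ^ 2 + c ^ 2) / 2 + (r₁ ^ 2 + r₂ ^ 2) / (2 * ν) := by
  have hsq : ν * (x ^ 2 + y ^ 2 + c ^ 2) / 2 + (r₁ ^ 2 + r₂ ^ 2) / (2 * ν) - (r₁ * x + r₂ * y)
      = ((ν * x - r₁) ^ 2 + (ν * y - r₂) ^ 2 + (ν * c) ^ 2) / (2 * ν) := by
    field_simp
    ring
  rw [← sub_nonneg, hsq]
  positivity

theorem le_objective_of_pos (hν : 0 < ν) (hν2 : ν < 2 * s) (ht : 0 < x ^ 2 + y ^ 2 + c ^ 2) :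
    (1 / 2) * log (2 * s - ν) - (r₁ ^ 2 + r₂ ^ 2) / (2 * ν) + 1 / 2 ≤
      objective s r₁ r₂ x y c := by
  have hrad := half_log_add_le_of_lt hν2 ht
  have hlin := mul_add_mul_le_of_pos (r₁ := r₁) (r₂ := r₂) (x := x) (y := y) (c := c) hν
  unfold objective
  linarith

theorem normSq_div_of_sq_eq (hν : 0 < ν) (hν2 : ν < 2 * s)
    (hroot : ν ^ 2 = (r₁ ^ 2 + r₂ ^ 2) * (2 * s - ν)) :
    (r₁ / ν) ^ 2 + (r₂ / ν) ^ 2 + 0 ^ 2 = (2 * s - ν)⁻¹ := by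
  have hq : 2 * s - ν ≠ 0 := by linarith
  field_simp
  linear_combination -hroot

theorem objective_div_of_sq_eq (hν : 0 < ν) (hν2 : ν < 2 * s)
    (hroot : ν ^ 2 = (r₁ ^ 2 + r₂ ^ 2) * (2 * s - ν)) :
    objective s r₁ r₂ (r₁ / ν) (r₂ / ν) 0 =
      (1 / 2) * log (2 * s - ν) - (r₁ ^ 2 + r₂ ^ 2) / (2 * ν) + 1 / 2 := by
  have hq : 2 * s - ν ≠ 0 := by linarith
  rw [objective, normSq_div_of_sq_eq hν hν2 hroot, log_inv]
  field_simp
  linear_combination hroot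

theorem isLeast_objectiveValues_of_pos (hν : 0 < ν) (hν2 : ν < 2 * s)
    (hroot : ν ^ 2 = (r₁ ^ 2 + r₂ ^ 2) * (2 * s - ν)) :
    IsLeast (objectiveValues s r₁ r₂)
      ((1 / 2) * log (2 * s - ν) - (r₁ ^ 2 + r₂ ^ 2) / (2 * ν) + 1 / 2) := by
  refine ⟨⟨r₁ / ν, r₂ / ν, 0, ?_, (objective_div_of_sq_eq hν hν2 hroot).symm⟩, ?_⟩
  · rw [normSq_div_of_sq_eq hν hν2 hroot]
    exact inv_pos.2 (by linarith)
  · rintro _ ⟨x, y, c, ht, rfl⟩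
    exact le_objective_of_pos hν hν2 ht

theorem isLeast_objectiveValues_zero (hs : 0 < s) :
    IsLeast (objectiveValues s 0 0) ((1 / 2) * log (2 * s) + 1 / 2) := by
  have hsphere : (0 : ℝ) ^ 2 + 0 ^ 2 + √(1 / (2 * s)) ^ 2 = (2 * s)⁻¹ := by
    rw [sq_sqrt (by positivity)]
    ring
  refine ⟨⟨0, 0, √(1 / (2 * s)), ?_, ?_⟩, ?_⟩
  · rw [hsphere]
    positivity
  · rw [objective, hsphere, log_inv]
    field_simp
    ring
  · rintro _ ⟨x, y, c, ht, rfl⟩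
    have h := half_log_add_le_of_lt (s := s) (ν := 0) (by linarith) ht
    simp only [objective, sub_zero, zero_mul, zero_div, add_zero] at h ⊢
    exact h

end objective

end InnerMin

open InnerMin in
theorem inner_min_closed_form (s r₁ r₂ rsq ν : ℝ) (hs : 0 < s)
    (hrsq : rsq = r₁ ^ 2 + r₂ ^ 2)
    (hν : ν = (-rsq + Real.sqrt (rsq ^ 2 + 8 * s * rsq)) / 2) :
    (0 ≤ ν ∧ ν < 2 * s) ∧
    ν ^ 2 = rsq * (2 * s - ν) ∧
    sInf {v | ∃ x y c : ℝ, 0 < x ^ 2 + y ^ 2 + c ^ 2 ∧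
        v = -(1 / 2) * Real.log (x ^ 2 + y ^ 2 + c ^ 2)
            + s * (x ^ 2 + y ^ 2 + c ^ 2) - r₁ * x - r₂ * y}
      = (1 / 2) * Real.log (2 * s - ν) - rsq / (2 * ν) + 1 / 2 ∧
    (0 < rsq →
      -(1 / 2) * Real.log ((r₁ / ν) ^ 2 + (r₂ / ν) ^ 2 + 0 ^ 2)
          + s * ((r₁ / ν) ^ 2 + (r₂ / ν) ^ 2 + 0 ^ 2) - r₁ * (r₁ / ν) - r₂ * (r₂ / ν)
        = (1 / 2) * Real.log (2 * s - ν) - rsq / (2 * ν) + 1 / 2) := by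
  change ν = nuRoot s rsq at hν
  have hrsq0 : 0 ≤ rsq := hrsq ▸ by positivity
  have hroot := nuRoot_sq hs.le hrsq0
  have hlt := nuRoot_lt hs hrsq0
  subst hν
  refine ⟨⟨nuRoot_nonneg hs.le hrsq0, hlt⟩, hroot, ?_, fun hpos => ?_⟩
  · rcases hrsq0.eq_or_lt with hzero | hpos
    · have hr₁ : r₁ = 0 := by nlinarith [sq_nonneg r₁, sq_nonneg r₂]
      have hr₂ : r₂ = 0 := by nlinarith [sq_nonneg r₁, sq_nonneg r₂]
      subst hzero hr₁ hr₂
      change sInf (objectiveValues s 0 0) = _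
      rw [(isLeast_objectiveValues_zero hs).csInf_eq]
      simp [nuRoot]
    · subst hrsq
      exact (isLeast_objectiveValues_of_pos (nuRoot_pos hs hpos) hlt hroot).csInf_eq
  · subst hrsq
    exact objective_div_of_sq_eq (nuRoot_pos hs hpos) hlt hroot
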